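/- Let F̂(s,t) be twice continuously differentiable and set F(x,t) := F̂(s(x,t),t). Then for all t ∈ (0,T] and all x ∈ (0,1) with x ≠ d: (𝓛F)(x,t) = g(x,t)·(L̂_d F̂)(s(x,t),t) + √(g(x,t))·(a(x,t) − a(d,t))·∂F/∂x(x,t), where (L̂_d F̂)(s,t) := −ε ∂²F̂/∂s² + â(d(t),t) ∂F̂/∂s + ∂F̂/∂t. -/

import Mathlib

/-!
On either side of `x = d` the map `s(·,t)` is affine with slope `√g(x,t)`, so `F_x = √g F̂_s` and
`F_xx = g F̂_ss`, while `∂ₜ s(x,t) = (1 - ψ_d(x)) d'(t) = (1 - ψ_d(x)) â(d(t),t)`. Substituting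
into `𝓛F`, the `ψ_d` terms of `κ F_x` and of `g F_t` cancel.
-/

/-- The coefficient `g(x,t)`: `(d(t)/d)²` for `x < d` and `((1-d(t))/(1-d))²` for `x > d`. -/
noncomputable def gfun (d : ℝ) (dd : ℝ → ℝ) (x t : ℝ) : ℝ :=
  if x < d then (dd t / d) ^ 2 else ((1 - dd t) / (1 - d)) ^ 2

/-- The change of variables: `s(x,t) = (d(t)/d)x` for `x ≤ d` and
`s(x,t) = 1 - ((1-d(t))/(1-d))(1-x)` for `x ≥ d`. -/
noncomputable def smap (d : ℝ) (dd : ℝ → ℝ) (x t : ℝ) : ℝ :=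
  if x ≤ d then (dd t / d) * x else 1 - ((1 - dd t) / (1 - d)) * (1 - x)

/-- `ψ_d(x) = (d-x)/d` for `x < d` and `(x-d)/(1-d)` for `x > d`. -/
noncomputable def psid (d x : ℝ) : ℝ :=
  if x < d then (d - x) / d else (x - d) / (1 - d)

/-- `κ(x,t) = sqrt(g(x,t)) (a(x,t) + a(d,t)(ψ_d(x) - 1))`, where
`a(x,t) = â(s(x,t),t)` and `a(d,t) = â(d(t),t)`. -/
noncomputable def kappa (ahat : ℝ → ℝ → ℝ) (d : ℝ) (dd : ℝ → ℝ) (x t : ℝ) : ℝ :=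
  Real.sqrt (gfun d dd x t) *
    (ahat (smap d dd x t) t + ahat (dd t) t * (psid d x - 1))

/-- The transformed operator `(𝓛F)(x,t) = -ε F_xx + κ F_x + g F_t`. -/
noncomputable def LL (ε : ℝ) (ahat : ℝ → ℝ → ℝ) (d : ℝ) (dd : ℝ → ℝ)
    (F : ℝ → ℝ → ℝ) (x t : ℝ) : ℝ :=
  -ε * iteratedDeriv 2 (fun x' => F x' t) x
    + kappa ahat d dd x t * deriv (fun x' => F x' t) x
    + gfun d dd x t * deriv (fun t' => F x t') t

/-- The operator `L̂_d F = -ε F_ss + â(d(t),t) F_s + F_t`. -/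
noncomputable def Ld (ε : ℝ) (a : ℝ → ℝ → ℝ) (dd : ℝ → ℝ) (F : ℝ → ℝ → ℝ) (s t : ℝ) : ℝ :=
  -ε * iteratedDeriv 2 (fun x => F x t) s
    + a (dd t) t * deriv (fun x => F x t) s
    + deriv (fun τ => F s τ) t

open Set Filter Topology

section ChainRule

variable {𝕜 : Type*} [NontriviallyNormedField 𝕜]

theorem iteratedDeriv_comp_mul_add {n : ℕ} {f : 𝕜 → 𝕜} (hf : ContDiff 𝕜 n f) (c b x : 𝕜) :
    iteratedDeriv n (fun y => f (c * y + b)) x = c ^ n * iteratedDeriv n f (c * x + b) := by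
  rw [iteratedDeriv_comp_const_mul (f := fun z => f (z + b))
    (hf.comp (contDiff_id.add contDiff_const)), iteratedDeriv_comp_add_const]

theorem iteratedDeriv_comp_of_eventuallyEq_affine {n : ℕ} {f s : 𝕜 → 𝕜} (hf : ContDiff 𝕜 n f)
    {c b x : 𝕜} (hs : s =ᶠ[𝓝 x] fun y => c * y + b) :
    iteratedDeriv n (fun y => f (s y)) x = c ^ n * iteratedDeriv n f (s x) := by
  calc iteratedDeriv n (fun y => f (s y)) x
      = iteratedDeriv n (fun y => f (c * y + b)) x := (hs.fun_comp f).iteratedDeriv_eq n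
    _ = c ^ n * iteratedDeriv n f (s x) := by rw [iteratedDeriv_comp_mul_add hf, hs.eq_of_nhds]

variable {E : Type*} [NormedAddCommGroup E] [NormedSpace 𝕜 E]

theorem deriv_comp_prodMk {f : 𝕜 → 𝕜 → E} {σ : 𝕜 → 𝕜} {σ' t : 𝕜}
    (hf : DifferentiableAt 𝕜 (fun p : 𝕜 × 𝕜 => f p.1 p.2) (σ t, t)) (hσ : HasDerivAt σ σ' t) :
    deriv (fun τ => f (σ τ) τ) t
      = σ' • deriv (fun s => f s t) (σ t) + deriv (fun τ => f (σ t) τ) t := by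
  set L := fderiv 𝕜 (fun p : 𝕜 × 𝕜 => f p.1 p.2) (σ t, t)
  have hL := hf.hasFDerivAt
  have h_path : HasDerivAt (fun τ => f (σ τ) τ) (L (σ', 1)) t :=
    hL.comp_hasDerivAt (f := fun τ => (σ τ, τ)) t (hσ.prodMk (hasDerivAt_id t))
  have h_fst : HasDerivAt (fun s => f s t) (L (1, 0)) (σ t) :=
    hL.comp_hasDerivAt (f := fun s => (s, t)) (σ t)
      ((hasDerivAt_id (σ t)).prodMk (hasDerivAt_const (σ t) t))
  have h_snd : HasDerivAt (fun τ => f (σ t) τ) (L (0, 1)) t :=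
    hL.comp_hasDerivAt (f := fun τ => (σ t, τ)) t
      ((hasDerivAt_const t (σ t)).prodMk (hasDerivAt_id t))
  rw [h_path.deriv, h_fst.deriv, h_snd.deriv, ← map_smul, ← map_add]
  simp

end ChainRule

section ChangeOfVariables

variable {d : ℝ} {dd : ℝ → ℝ}

theorem gfun_nonneg (x t : ℝ) : 0 ≤ gfun d dd x t := by
  unfold gfun; split_ifs <;> positivity

theorem psid_of_le {x : ℝ} (hx : x ≤ d) : psid d x = (d - x) / d := by
  unfold psid
  split_ifs with h
  · rfl
  · simp [le_antisymm hx (not_lt.mp h)]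

theorem smap_eventuallyEq_affine (hd : d ∈ Icc (0 : ℝ) 1) {x t : ℝ} (hdt : dd t ∈ Icc (0 : ℝ) 1)
    (hx : x ≠ d) :
    ∃ b, (fun y => smap d dd y t) =ᶠ[𝓝 x] fun y => Real.sqrt (gfun d dd x t) * y + b := by
  rcases hx.lt_or_gt with h | h
  · have hc : Real.sqrt (gfun d dd x t) = dd t / d := by
      rw [gfun, if_pos h, Real.sqrt_sq (div_nonneg hdt.1 hd.1)]
    refine ⟨0, ?_⟩
    filter_upwards [Iio_mem_nhds h] with y hy
    rw [smap, if_pos hy.le, hc, add_zero]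
  · have hc : Real.sqrt (gfun d dd x t) = (1 - dd t) / (1 - d) := by
      rw [gfun, if_neg h.not_gt,
        Real.sqrt_sq (div_nonneg (sub_nonneg.2 hdt.2) (sub_nonneg.2 hd.2))]
    refine ⟨1 - (1 - dd t) / (1 - d), ?_⟩
    filter_upwards [Ioi_mem_nhds h] with y hy
    rw [smap, if_neg hy.not_ge, hc]
    ring

theorem hasDerivAt_smap_time (hd0 : d ≠ 0) (hd1 : d ≠ 1) (x : ℝ) {t v : ℝ}
    (hdd : HasDerivAt dd v t) :
    HasDerivAt (fun τ => smap d dd x τ) ((1 - psid d x) * v) t := by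
  by_cases h : x ≤ d
  · simp only [smap, if_pos h]
    refine ((hdd.div_const d).mul_const x).congr_deriv ?_
    rw [psid_of_le h]
    field_simp
    ring
  · have hd1' : 1 - d ≠ 0 := sub_ne_zero.2 (Ne.symm hd1)
    simp only [smap, if_neg h]
    refine ((((hdd.const_sub 1).div_const (1 - d)).mul_const (1 - x)).const_sub 1).congr_deriv ?_
    rw [psid, if_neg (fun h' => h h'.le)]
    field_simp
    ring

end ChangeOfVariables

theorem stmt_12_general
    (ε T d : ℝ) (hd : d ∈ Set.Ioo (0 : ℝ) 1)
    (ahat : ℝ → ℝ → ℝ)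
    (dd : ℝ → ℝ)
    (hddODE : ∀ t ∈ Set.Icc (0 : ℝ) T, HasDerivAt dd (ahat (dd t) t) t)
    (hddQ : ∀ t ∈ Set.Icc (0 : ℝ) T, dd t ∈ Set.Ioo (0 : ℝ) 1)
    (Fhat : ℝ → ℝ → ℝ)
    (hFhat : ContDiff ℝ 2 (fun p : ℝ × ℝ => Fhat p.1 p.2)) :
    ∀ t ∈ Set.Ioc (0 : ℝ) T, ∀ x ∈ Set.Ioo (0 : ℝ) 1, x ≠ d →
      LL ε ahat d dd (fun x' t' => Fhat (smap d dd x' t') t') x t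
        = gfun d dd x t * Ld ε ahat dd Fhat (smap d dd x t) t
          + Real.sqrt (gfun d dd x t) * (ahat (smap d dd x t) t - ahat (dd t) t)
            * deriv (fun x' => Fhat (smap d dd x' t) t) x := by
  intro t ht x _ hxd
  have htT : t ∈ Icc 0 T := Ioc_subset_Icc_self ht
  obtain ⟨b, hs⟩ := smap_eventuallyEq_affine (Ioo_subset_Icc_self hd)
    (Ioo_subset_Icc_self (hddQ t htT)) hxd
  have hFhat_t : ContDiff ℝ 2 (fun s => Fhat s t) :=
    hFhat.comp (contDiff_id.prodMk contDiff_const)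
  have hFx := iteratedDeriv_comp_of_eventuallyEq_affine (hFhat_t.of_le one_le_two) hs
  have hFxx := iteratedDeriv_comp_of_eventuallyEq_affine hFhat_t hs
  have hFt := deriv_comp_prodMk (hFhat.differentiable two_ne_zero _)
    (hasDerivAt_smap_time hd.1.ne' hd.2.ne x (hddODE t htT))
  rw [iteratedDeriv_one, iteratedDeriv_one] at hFx
  have hg : gfun d dd x t = Real.sqrt (gfun d dd x t) ^ 2 :=
    (Real.sq_sqrt (gfun_nonneg x t)).symm
  simp only [LL, Ld, kappa]
  rw [hFx, hFxx, hFt, smul_eq_mul]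
  linear_combination (ε * iteratedDeriv 2 (fun s => Fhat s t) (smap d dd x t)
    - psid d x * ahat (dd t) t * deriv (fun s => Fhat s t) (smap d dd x t)) * hg

/-- if `Fhat` is twice continuously differentiable and
`F(x,t) = Fhat(s(x,t),t)`, then for `t ∈ (0,T]` and `x ∈ (0,1)` with `x ≠ d`:
`(𝓛F)(x,t) = g(x,t)(L̂_d Fhat)(s(x,t),t)
  + sqrt(g(x,t))(a(x,t) - a(d,t)) ∂F/∂x(x,t)`. -/
theorem stmt_12
    (ε T d α : ℝ) (hε : 0 < ε) (hT : 0 < T) (hd : d ∈ Set.Ioo (0 : ℝ) 1) (hα : 0 < α)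
    (ahat : ℝ → ℝ → ℝ)
    (haC1 : ContDiffOn ℝ 1 (fun p : ℝ × ℝ => ahat p.1 p.2)
      (Set.Icc 0 1 ×ˢ Set.Icc 0 T))
    (haα : ∀ s ∈ Set.Icc (0 : ℝ) 1, ∀ t ∈ Set.Icc (0 : ℝ) T, α ≤ ahat s t)
    (dd : ℝ → ℝ)
    (hddODE : ∀ t ∈ Set.Icc (0 : ℝ) T, HasDerivAt dd (ahat (dd t) t) t)
    (hdd0 : dd 0 = d)
    (hddQ : ∀ t ∈ Set.Icc (0 : ℝ) T, dd t ∈ Set.Ioo (0 : ℝ) 1)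
    (hddT : dd T < 1)
    (Fhat : ℝ → ℝ → ℝ)
    (hFhat : ContDiff ℝ 2 (fun p : ℝ × ℝ => Fhat p.1 p.2)) :
    ∀ t ∈ Set.Ioc (0 : ℝ) T, ∀ x ∈ Set.Ioo (0 : ℝ) 1, x ≠ d →
      LL ε ahat d dd (fun x' t' => Fhat (smap d dd x' t') t') x t
        = gfun d dd x t * Ld ε ahat dd Fhat (smap d dd x t) t
          + Real.sqrt (gfun d dd x t) * (ahat (smap d dd x t) t - ahat (dd t) t)
            * deriv (fun x' => Fhat (smap d dd x' t) t) x :=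
  stmt_12_general ε T d hd ahat dd hddODE hddQ Fhat hFhat
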